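/- No Lucas-balancing number C_l with l ≥ 1 is a power of 2; that is, if l ≥ 1 and t ≥ 0 are integers, then C_l ≠ 2^t. -/
import Mathlib


/-- Lucas-balancing numbers: `C 0 = 1`, `C 1 = 3`, `C (j+2) = 6 * C (j+1) - C j`. -/
def lucasBalancing : ℕ → ℤ
  | 0 => 1
  | 1 => 3
  | j + 2 => 6 * lucasBalancing (j + 1) - lucasBalancing j

lemma lucasBalancing_grow : ∀ j, 1 ≤ lucasBalancing j ∧ lucasBalancing j < lucasBalancing (j + 1)
  | 0 => by simp [lucasBalancing]
  | 1 => by simp [lucasBalancing]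
  | j + 2 => by
    obtain ⟨h1, h2⟩ := lucasBalancing_grow j
    obtain ⟨h3, h4⟩ := lucasBalancing_grow (j + 1)
    constructor
    · show (1 : ℤ) ≤ 6 * lucasBalancing (j + 1) - lucasBalancing j
      linarith
    · show 6 * lucasBalancing (j + 1) - lucasBalancing j
        < 6 * lucasBalancing (j + 2) - lucasBalancing (j + 1)
      have : lucasBalancing (j + 2) = 6 * lucasBalancing (j + 1) - lucasBalancing j := rfl
      linarith

lemma lucasBalancing_odd : ∀ j, lucasBalancing j % 2 = 1
  | 0 => rfl
  | 1 => rfl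
  | j + 2 => by
    have h1 := lucasBalancing_odd j
    show (6 * lucasBalancing (j + 1) - lucasBalancing j) % 2 = 1
    omega

lemma lucasBalancing_ge : ∀ j, 3 ≤ lucasBalancing (j + 1)
  | 0 => by norm_num [lucasBalancing]
  | j + 1 => by
    have h := lucasBalancing_ge j
    have h2 := (lucasBalancing_grow (j + 1)).2
    linarith

theorem stmt3 (l t : ℕ) (hl : 1 ≤ l) : lucasBalancing l ≠ 2 ^ t := by
  intro h
  obtain ⟨k, rfl⟩ := Nat.exists_eq_add_of_le hl
  have h3 := lucasBalancing_ge k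
  have hodd := lucasBalancing_odd (1 + k)
  rw [Nat.add_comm] at h3
  rcases Nat.eq_zero_or_pos t with ht | ht
  · subst ht; simp at h; omega
  · have : (2 : ℤ) ^ t % 2 = 0 := by
      obtain ⟨s, rfl⟩ := Nat.exists_eq_add_of_le ht
      rw [pow_add]
      simp [Int.mul_emod]
    omega
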